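/- Under the hypotheses of the essential monadicity theorem, the Kleisli comparison induces an equivalence Kleisli(A)^♮ ≃ D after idempotent completion: the Karoubi envelope of the Kleisli category of A is equivalent to D. -/

import Mathlib

/-!
Every object `d` of `D` is a retract of `F (G d)`, i.e. of an object in the image of the
Kleisli comparison `K`. Indeed, the counit `F G d ⟶ d` becomes a split epimorphism of
algebras after applying the Eilenberg–Moore comparison (its underlying map is split by the
unit), hence is a split epimorphism in the triangulated category of algebras, where every
epimorphism splits. A section of it gives an idempotent on `F G d`; splitting that idempotent
in `D` yields an object which `G` maps isomorphically onto `G d`, so conservativity makes `d`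
a retract of `F G d`. Since `K` is fully faithful, its extension to the Karoubi envelope is
then fully faithful and essentially surjective.
-/

open CategoryTheory

variable {C D : Type*} [Category C] [Category D]

/-- The Kleisli comparison functor `K : Kleisli(GF) ⥤ D` of an adjunction `F ⊣ G`,
sending `x` to `F x`; it satisfies `K ∘ F_A = F` and `G ∘ K = U_A`. -/
def kleisliComparison {F : C ⥤ D} {G : D ⥤ C} (adj : F ⊣ G) :
    Kleisli adj.toMonad ⥤ D where
  obj X := F.obj X.of
  map {X Y} f := F.map f.of ≫ adj.counit.app (F.obj Y.of)
  map_id X := by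
    change F.map (adj.unit.app X.of) ≫ adj.counit.app (F.obj X.of) = _
    simp
  map_comp {X Y Z} f g := by
    change F.map (f.of ≫ G.map (F.map g.of) ≫ G.map (adj.counit.app _)) ≫ _ = _
    dsimp [Adjunction.toMonad]
    simp [adj.counit_naturality_assoc]

open Limits Pretriangulated Idempotents

namespace CategoryTheory

theorem Functor.FullyFaithful.essSurj_of_forall_retract [IsIdempotentComplete C] {L : C ⥤ D}
    (hL : L.FullyFaithful) (hretract : ∀ d : D, ∃ c : C, Nonempty (Retract d (L.obj c))) :
    L.EssSurj where
  mem_essImage d := by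
    obtain ⟨c, ⟨h⟩⟩ := hretract d
    have hidem : hL.preimage (h.r ≫ h.i) ≫ hL.preimage (h.r ≫ h.i) = hL.preimage (h.r ≫ h.i) :=
      hL.map_injective (by simp)
    obtain ⟨c', ι, π, hιπ, hπι⟩ := IsIdempotentComplete.idempotents_split c _ hidem
    have hsplit : L.map (π ≫ ι) = h.r ≫ h.i := by rw [hπι, hL.map_preimage]
    refine ⟨c', ⟨⟨L.map ι ≫ h.r, h.i ≫ L.map π, ?_, ?_⟩⟩⟩
    · calc (L.map ι ≫ h.r) ≫ h.i ≫ L.map π = L.map ι ≫ (h.r ≫ h.i) ≫ L.map π := by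
            simp only [Category.assoc]
        _ = L.map ((ι ≫ π) ≫ ι ≫ π) := by simp only [← hsplit, L.map_comp, Category.assoc]
        _ = 𝟙 _ := by rw [hιπ, Category.id_comp, L.map_id]
    · calc (h.i ≫ L.map π) ≫ L.map ι ≫ h.r = h.i ≫ (h.r ≫ h.i) ≫ h.r := by
            simp only [← hsplit, L.map_comp, Category.assoc]
        _ = 𝟙 d := by simp

def Functor.FullyFaithful.functorExtension₂Obj {K : C ⥤ D} (hK : K.FullyFaithful) :
    ((functorExtension₂ C D).obj K).FullyFaithful where
  preimage {P Q} f := ⟨hK.preimage (f.f : K.obj P.X ⟶ K.obj Q.X), hK.map_injective (by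
    rw [K.map_comp, K.map_comp]; erw [hK.map_preimage]; exact f.comm)⟩
  map_preimage f := Karoubi.hom_ext _ _ (hK.map_preimage f.f)
  preimage_map f := Karoubi.hom_ext _ _ (hK.preimage_map f.f)

noncomputable def toKaroubiCompFunctorExtensionObjIso [IsIdempotentComplete D] (K : C ⥤ D) :
    toKaroubi C ⋙ (functorExtension C D).obj K ≅ K :=
  (Functor.associator _ _ _).symm ≪≫
    Functor.isoWhiskerRight ((functorExtension₂CompWhiskeringLeftToKaroubiIso C D).app K)
      (toKaroubiEquivalence D).inverse ≪≫
    Functor.associator _ _ _ ≪≫ Functor.isoWhiskerLeft K (toKaroubiEquivalence D).unitIso.symm ≪≫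
    K.rightUnitor

theorem Functor.FullyFaithful.isEquivalence_functorExtension_obj [IsIdempotentComplete D]
    {K : C ⥤ D} (hK : K.FullyFaithful)
    (hretract : ∀ d : D, ∃ c : C, Nonempty (Retract d (K.obj c))) :
    ((functorExtension C D).obj K).IsEquivalence := by
  have hK' : ((functorExtension C D).obj K).FullyFaithful :=
    hK.functorExtension₂Obj.comp (toKaroubiEquivalence D).fullyFaithfulInverse
  have := hK'.full
  have := hK'.faithful
  have := hK'.essSurj_of_forall_retract fun d => by
    obtain ⟨c, ⟨h⟩⟩ := hretract d
    exact ⟨(toKaroubi C).obj c,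
      ⟨h.trans ((toKaroubiCompFunctorExtensionObjIso K).app c).symm.retract⟩⟩
  exact { }

theorem kleisliComparison_map {F : C ⥤ D} {G : D ⥤ C} (adj : F ⊣ G)
    {X Y : Kleisli adj.toMonad} (f : X ⟶ Y) :
    (kleisliComparison adj).map f = (adj.homEquiv X.of (F.obj Y.of)).symm f.of :=
  (adj.homEquiv_counit ..).symm

def fullyFaithfulKleisliComparison {F : C ⥤ D} {G : D ⥤ C} (adj : F ⊣ G) :
    (kleisliComparison adj).FullyFaithful where
  preimage {X Y} g := ⟨adj.homEquiv X.of (F.obj Y.of) g⟩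
  map_preimage g := (kleisliComparison_map adj _).trans ((adj.homEquiv _ _).symm_apply_apply g)
  preimage_map f := Kleisli.hom_ext <|
    (congrArg _ (kleisliComparison_map adj f)).trans ((adj.homEquiv _ _).apply_symm_apply f.of)

namespace Adjunction

variable {F : C ⥤ D} {G : D ⥤ C} (adj : F ⊣ G)

/-- `(Monad.comparison adj).obj (F.obj X)` is the free algebra on `X`, so both sides are
in bijection with `X ⟶ G.obj Y`. -/
theorem comparison_map_bijective (X : C) (Y : D) :
    Function.Bijective fun f : F.obj X ⟶ Y => (Monad.comparison adj).map f := by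
  refine ⟨fun f g hfg => ?_, fun h => ⟨(adj.homEquiv X Y).symm (adj.unit.app X ≫ h.f), ?_⟩⟩
  · have : G.map f = G.map g := congrArg Monad.Algebra.Hom.f hfg
    apply (adj.homEquiv X Y).injective
    rw [adj.homEquiv_unit, adj.homEquiv_unit, this]
  · obtain ⟨g, hg⟩ : ∃ g : G.obj (F.obj X) ⟶ G.obj Y, h.f = g := ⟨_, rfl⟩
    have hh : G.map (F.map g) ≫ G.map (adj.counit.app Y) =
        G.map (adj.counit.app (F.obj X)) ≫ g := hg ▸ h.h
    ext
    rw [hg]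
    calc G.map (F.map (adj.unit.app X ≫ g) ≫ adj.counit.app Y)
        = G.map (F.map (adj.unit.app X)) ≫ G.map (F.map g) ≫ G.map (adj.counit.app Y) := by
          simp only [Functor.map_comp, Category.assoc]
      _ = g := by rw [hh, ← G.map_comp_assoc]; simp

theorem epi_comparison_map_counit_app (d : D) :
    Epi ((Monad.comparison adj).map (adj.counit.app d)) := by
  have : IsSplitEpi (adj.toMonad.forget.map ((Monad.comparison adj).map (adj.counit.app d))) :=
    ⟨⟨adj.unit.app (G.obj d), adj.right_triangle_components d⟩⟩
  exact adj.toMonad.forget.epi_of_epi_map inferInstance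

theorem isSplitEpi_counit_app_of_isSplitEpi_comparison_map [IsIdempotentComplete D]
    [G.ReflectsIsomorphisms] (d : D)
    [IsSplitEpi ((Monad.comparison adj).map (adj.counit.app d))] :
    IsSplitEpi (adj.counit.app d) := by
  set Φ := Monad.comparison adj
  obtain ⟨s, hs⟩ : ∃ s, s ≫ Φ.map (adj.counit.app d) = 𝟙 _ := ⟨_, IsSplitEpi.id _⟩
  obtain ⟨e, he : Φ.map e = Φ.map (adj.counit.app d) ≫ s⟩ :=
    (adj.comparison_map_bijective _ _).2 (Φ.map (adj.counit.app d) ≫ s)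
  have he_idem : e ≫ e = e := (adj.comparison_map_bijective _ _).1 <| by
    dsimp only
    rw [Φ.map_comp, he, Category.assoc, reassoc_of% hs]
  obtain ⟨Y, ι, π, hιπ, hπι⟩ := IsIdempotentComplete.idempotents_split _ e he_idem
  have : IsIso (Φ.map (ι ≫ adj.counit.app d)) := by
    refine ⟨s ≫ Φ.map π, ?_, ?_⟩
    · calc Φ.map (ι ≫ adj.counit.app d) ≫ s ≫ Φ.map π
          = Φ.map ι ≫ Φ.map e ≫ Φ.map π := by rw [he, Φ.map_comp]; simp only [Category.assoc]
        _ = Φ.map ((ι ≫ π) ≫ ι ≫ π) := by rw [← hπι]; simp only [Φ.map_comp, Category.assoc]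
        _ = 𝟙 _ := by rw [hιπ, Category.id_comp, Φ.map_id]
    · calc (s ≫ Φ.map π) ≫ Φ.map (ι ≫ adj.counit.app d)
          = s ≫ Φ.map e ≫ Φ.map (adj.counit.app d) := by
            rw [← hπι]; simp only [Φ.map_comp, Category.assoc]
        _ = 𝟙 _ := by rw [he, Category.assoc, reassoc_of% hs, hs]
  have : IsIso (G.map (ι ≫ adj.counit.app d)) :=
    inferInstanceAs (IsIso (adj.toMonad.forget.map (Φ.map _)))
  have := isIso_of_reflects_iso (ι ≫ adj.counit.app d) G
  exact ⟨⟨inv (ι ≫ adj.counit.app d) ≫ ι, by simp⟩⟩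

theorem isSplitEpi_counit_app [IsIdempotentComplete D] [G.ReflectsIsomorphisms]
    [SplitEpiCategory adj.toMonad.Algebra] (d : D) : IsSplitEpi (adj.counit.app d) :=
  have := adj.epi_comparison_map_counit_app d
  have := isSplitEpi_of_epi ((Monad.comparison adj).map (adj.counit.app d))
  adj.isSplitEpi_counit_app_of_isSplitEpi_comparison_map d

end Adjunction

end CategoryTheory

/-- Under the hypotheses of the essential monadicity theorem, the Kleisli comparison
functor `K : Kleisli(A) ⥤ D` induces an equivalence `Kleisli(A)^♮ ≌ D` after idempotent
completion (Karoubi envelope). -/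
theorem kleisli_karoubi_equivalence
    {C D : Type*} [Category C] [Category D]
    [HasZeroObject C] [HasZeroObject D] [Preadditive C] [Preadditive D]
    [HasShift C ℤ] [HasShift D ℤ]
    [∀ n : ℤ, (CategoryTheory.shiftFunctor C n).Additive]
    [∀ n : ℤ, (CategoryTheory.shiftFunctor D n).Additive]
    [Pretriangulated C] [Pretriangulated D]
    [IsIdempotentComplete C] [IsIdempotentComplete D]
    {F : C ⥤ D} {G : D ⥤ C}
    [F.Additive] [F.CommShift ℤ] [F.IsTriangulated]
    [G.Additive] [G.CommShift ℤ] [G.IsTriangulated] [G.ReflectsIsomorphisms]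
    (adj : F ⊣ G)
    [HasZeroObject adj.toMonad.Algebra] [Preadditive adj.toMonad.Algebra]
    [HasShift adj.toMonad.Algebra ℤ]
    [∀ n : ℤ, (CategoryTheory.shiftFunctor adj.toMonad.Algebra n).Additive]
    [Pretriangulated adj.toMonad.Algebra]
    [adj.toMonad.forget.Additive] [adj.toMonad.forget.CommShift ℤ]
    [adj.toMonad.forget.IsTriangulated]
    [adj.toMonad.free.Additive] [adj.toMonad.free.CommShift ℤ]
    [adj.toMonad.free.IsTriangulated] :
    ∃ K' : Karoubi (Kleisli adj.toMonad) ⥤ D,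
      Nonempty (toKaroubi (Kleisli adj.toMonad) ⋙ K' ≅ kleisliComparison adj) ∧
        K'.IsEquivalence := by
  have hretract (d : D) : Retract d (F.obj (G.obj d)) := by
    have := adj.isSplitEpi_counit_app d
    exact ⟨section_ (adj.counit.app d), adj.counit.app d, IsSplitEpi.id _⟩
  exact ⟨(functorExtension _ D).obj (kleisliComparison adj),
    ⟨toKaroubiCompFunctorExtensionObjIso _⟩,
    (fullyFaithfulKleisliComparison adj).isEquivalence_functorExtension_obj
      fun d => ⟨Kleisli.mk _ (G.obj d), ⟨hretract d⟩⟩⟩
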